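/- arXiv:2310.05265 — 5 statements merged into one kernel-verified Lean document; each statement's English description precedes it below -/
import Mathlib

section
/- Let δ ∈ ℂ with 0 < |δ| < 1 and r ≥ 2 a natural number, and suppose a, b, d ∈ ℂ with a ≠ 0, d ≠ 0. Define φ : ℂ² → ℂ² by φ(z,w) = (a·conj(z) + b·conj(w)^r, d·conj(w)). Then φ ∘ φ = id if and only if |a| = 1, |d| = 1, and a·conj(b) + b·conj(d)^r = 0. -/
/-! Since conjugation is an involutive ring automorphism, `φ ∘ φ` is the holomorphic polynomial map
`(z, w) ↦ (|a|² z + (a conj b + b (conj d)^r) w^r, |d|² w)`, and such a map is the identity exactly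
when its three coefficients are `1`, `1` and `0`, as evaluating at `(0, 1)` and `(1, 0)` shows. -/

open ComplexConjugate

theorem triangular_map_eq_id_iff {R : Type*} [CommSemiring R] (α β γ : R) (r : ℕ) :
    (∀ z w : R, (α * z + γ * w ^ r, β * w) = (z, w)) ↔ α = 1 ∧ β = 1 ∧ γ = 0 := by
  constructor
  · intro h
    obtain ⟨hγ, hβ⟩ := Prod.ext_iff.mp (h 0 1)
    simp only [mul_zero, one_pow, mul_one, zero_add] at hγ hβ
    have hα := (Prod.ext_iff.mp (h 1 0)).1
    simp only [mul_one, hγ, zero_mul, add_zero] at hα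
    exact ⟨hα, hβ, hγ⟩
  · rintro ⟨rfl, rfl, rfl⟩ z w
    simp

theorem Complex.mul_conj_eq_one_iff (a : ℂ) : a * conj a = 1 ↔ ‖a‖ = 1 := by
  rw [Complex.mul_conj', ← Complex.ofReal_pow, Complex.ofReal_eq_one,
    pow_eq_one_iff_of_nonneg (norm_nonneg a) two_ne_zero]

theorem antiholomorphic_map_comp_self (r : ℕ) (a b d : ℂ) (φ : ℂ × ℂ → ℂ × ℂ)
    (hφ : ∀ z w : ℂ, φ (z, w) = (a * conj z + b * conj w ^ r, d * conj w)) (z w : ℂ) :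
    φ (φ (z, w)) =
      (a * conj a * z + (a * conj b + b * conj d ^ r) * w ^ r, d * conj d * w) := by
  simp only [hφ, map_add, map_mul, map_pow, Complex.conj_conj, mul_pow, Prod.mk.injEq]
  constructor <;> ring

theorem stmt_4_general
    (r : ℕ) (a b d : ℂ)
    (φ : ℂ × ℂ → ℂ × ℂ)
    (hφ : ∀ z w : ℂ, φ (z, w) =
      (a * (starRingEnd ℂ z) + b * (starRingEnd ℂ w) ^ r, d * (starRingEnd ℂ w))) :
    (∀ p : ℂ × ℂ, φ (φ p) = p) ↔
      (‖a‖ = 1 ∧ ‖d‖ = 1 ∧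
        a * (starRingEnd ℂ b) + b * (starRingEnd ℂ d) ^ r = 0) := by
  simp only [Prod.forall, antiholomorphic_map_comp_self r a b d φ hφ,
    triangular_map_eq_id_iff, Complex.mul_conj_eq_one_iff]

/-- The anti-holomorphic map `φ(z,w) = (a conj z + b (conj w)^r, d conj w)` is an
involution iff `|a| = 1`, `|d| = 1` and `a conj b + b (conj d)^r = 0`. -/
theorem stmt_4 (δ : ℂ) (hδ0 : 0 < ‖δ‖) (hδ1 : ‖δ‖ < 1)
    (r : ℕ) (hr : 2 ≤ r) (a b d : ℂ) (ha : a ≠ 0) (hd : d ≠ 0)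
    (φ : ℂ × ℂ → ℂ × ℂ)
    (hφ : ∀ z w : ℂ, φ (z, w) =
      (a * (starRingEnd ℂ z) + b * (starRingEnd ℂ w) ^ r, d * (starRingEnd ℂ w))) :
    (∀ p : ℂ × ℂ, φ (φ p) = p) ↔
      (‖a‖ = 1 ∧ ‖d‖ = 1 ∧
        a * (starRingEnd ℂ b) + b * (starRingEnd ℂ d) ^ r = 0) :=
  stmt_4_general r a b d φ hφ
end

section
/- Let δ ∈ ℂ with 0 < |δ| < 1 and r ≥ 2, and let φ(z,w) = (a·conj(z) + b·conj(w)^r, d·conj(w)) with a, d ∈ ℂ*, b ∈ ℂ, satisfying φ∘φ = id. Then there exist A, D ∈ ℂ* and B ∈ ℂ such that, with ψ(z,w) = (A·z + B·w^r, D·w), one has φ = ψ ∘ c ∘ ψ⁻¹, where c is coordinatewise conjugation. -/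
/-!
Writing `ψ_{A,B,D}(z, w) = (A z + B w^r, D w)`, the map is `φ = ψ_{a,b,d} ∘ c`, and `φ ∘ φ = id`
amounts to `a ā = 1`, `d d̄ = 1` and `a b̄ + b d̄^r = 0`. A unimodular `a` has the form `A / Ā`
(Hilbert 90 for `ℂ/ℝ`), and likewise `d = D / D̄`; the last relation then makes `B = b D̄^r / 2`
the missing coefficient, so that `φ ∘ ψ_{A,B,D} = ψ_{A,B,D} ∘ c`.
-/

open ComplexConjugate

def shear (r : ℕ) (A B D : ℂ) (p : ℂ × ℂ) : ℂ × ℂ :=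
  (A * p.1 + B * p.2 ^ r, D * p.2)

lemma Complex.exists_ne_zero_mul_conj_eq_self {a : ℂ} (ha : a * conj a = 1) :
    ∃ A : ℂ, A ≠ 0 ∧ a * conj A = A := by
  by_cases h : a = -1
  · exact ⟨Complex.I, Complex.I_ne_zero, by simp [h]⟩
  · refine ⟨1 + a, fun hc => h (by linear_combination hc), ?_⟩
    simp only [map_add, map_one]
    linear_combination ha

section

variable {r : ℕ} {a b d : ℂ}

lemma shear_star_shear_star (p : ℂ × ℂ) :
    shear r a b d (star (shear r a b d (star p))) =
      ((a * conj a) * p.1 + (a * conj b + b * conj d ^ r) * p.2 ^ r, (d * conj d) * p.2) := by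
  obtain ⟨z, w⟩ := p
  simp only [shear, Prod.star_def, Complex.star_def, map_add, map_mul, map_pow,
    Complex.conj_conj, Prod.mk.injEq]
  constructor <;> ring

lemma coeff_relations_of_involutive (h : Function.Involutive (shear r a b d ∘ star)) :
    a * conj a = 1 ∧ d * conj d = 1 ∧ a * conj b + b * conj d ^ r = 0 := by
  -- Evaluating at points with `w = 1` keeps `w ^ r = 1` uniform in `r`, including `0 ^ 0 = 1`.
  have h₀₁ := h (0, 1)
  have h₁₁ := h (1, 1)
  simp only [Function.comp_apply, shear_star_shear_star, one_pow, mul_one, mul_zero, zero_add,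
    Prod.mk.injEq] at h₀₁ h₁₁
  exact ⟨by linear_combination h₁₁.1 - h₀₁.1, h₀₁.2, h₀₁.1⟩

lemma shear_star_shear_eq_shear_star {A D : ℂ} (hd : d * conj d = 1)
    (hb : a * conj b + b * conj d ^ r = 0) (hA : a * conj A = A) (hD : d * conj D = D)
    (p : ℂ × ℂ) :
    shear r a b d (star (shear r A (b * conj D ^ r / 2) D p)) =
      shear r A (b * conj D ^ r / 2) D (star p) := by
  obtain ⟨z, w⟩ := p
  have hconjD_pow : conj D ^ r = conj d ^ r * D ^ r := by
    rw [← mul_pow]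
    congr 1
    linear_combination conj d * hD - conj D * hd
  simp only [shear, Prod.star_def, Complex.star_def, map_add, map_mul, map_pow, map_div₀,
    map_ofNat, Complex.conj_conj, Prod.mk.injEq]
  refine ⟨?_, by rw [← mul_assoc, hD]⟩
  linear_combination conj z * hA + conj w ^ r * (D ^ r * hb + b * hconjD_pow) / 2

end

theorem stmt_5_general
    (r : ℕ) (a b d : ℂ)
    (φ : ℂ × ℂ → ℂ × ℂ)
    (hφ : ∀ z w : ℂ, φ (z, w) =
      (a * (starRingEnd ℂ z) + b * (starRingEnd ℂ w) ^ r, d * (starRingEnd ℂ w)))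
    (hinv : ∀ p : ℂ × ℂ, φ (φ p) = p) :
    ∃ (A D B : ℂ), A ≠ 0 ∧ D ≠ 0 ∧
      ∀ z w : ℂ, φ (A * z + B * w ^ r, D * w) =
        (A * (starRingEnd ℂ z) + B * (starRingEnd ℂ w) ^ r, D * (starRingEnd ℂ w)) := by
  have hφ_eq : φ = shear r a b d ∘ star := funext fun ⟨z, w⟩ => hφ z w
  obtain ⟨ha, hd, hb⟩ := coeff_relations_of_involutive (hφ_eq ▸ hinv)
  obtain ⟨A, hA0, hA⟩ := Complex.exists_ne_zero_mul_conj_eq_self ha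
  obtain ⟨D, hD0, hD⟩ := Complex.exists_ne_zero_mul_conj_eq_self hd
  refine ⟨A, D, b * conj D ^ r / 2, hA0, hD0, fun z w => ?_⟩
  rw [hφ_eq]
  exact shear_star_shear_eq_shear_star hd hb hA hD (z, w)

/-- Any anti-holomorphic involution of class III type is conjugate, via a holomorphic
automorphism `ψ(z,w) = (Az + Bw^r, Dw)`, to the standard conjugation `c`; equivalently
`φ ∘ ψ = ψ ∘ c`. -/
theorem stmt_5 (δ : ℂ) (hδ0 : 0 < ‖δ‖) (hδ1 : ‖δ‖ < 1)
    (r : ℕ) (hr : 2 ≤ r) (a b d : ℂ) (ha : a ≠ 0) (hd : d ≠ 0)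
    (φ : ℂ × ℂ → ℂ × ℂ)
    (hφ : ∀ z w : ℂ, φ (z, w) =
      (a * (starRingEnd ℂ z) + b * (starRingEnd ℂ w) ^ r, d * (starRingEnd ℂ w)))
    (hinv : ∀ p : ℂ × ℂ, φ (φ p) = p) :
    ∃ (A D B : ℂ), A ≠ 0 ∧ D ≠ 0 ∧
      ∀ z w : ℂ, φ (A * z + B * w ^ r, D * w) =
        (A * (starRingEnd ℂ z) + B * (starRingEnd ℂ w) ^ r, D * (starRingEnd ℂ w)) :=
  stmt_5_general r a b d φ hφ hinv
end

section
/- Let δ ∈ (0,1), r ≥ 2, and define f(z,w) = (δ^r·z + w^r, δ·w) on ℂ². For k ∈ ℕ, k ≥ 1, define g(z,w) = (δ^{r/k}·z + (1/k)·δ^{r(1−k)/k}·w^r, δ^{1/k}·w), using the positive real k-th root δ^{1/k}. Then the k-th iterate g^k equals f. -/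
/-!
Write `(a, c)` for the map `(z, w) ↦ (a ^ r z + c w ^ r, a w)`. These maps compose as
`(a, c) ∘ (b, d) = (a b, a ^ r d + c b ^ r)`, so the `n`-th iterate of `(a, c)` is
`(a ^ n, n a ^ (r (n - 1)) c)`. For `a = δ ^ (1/k)` and `c = δ ^ (r (1 - k) / k) / k` the
`k`-th iterate is `(δ, 1)`, which is `f`.
-/

section TriangularMap

variable {R : Type*} [CommSemiring R]

def triangularMap (r : ℕ) (a c : R) : R × R → R × R :=
  fun p => (a ^ r * p.1 + c * p.2 ^ r, a * p.2)

theorem triangularMap_comp (r : ℕ) (a b c d : R) :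
    triangularMap r a c ∘ triangularMap r b d = triangularMap r (a * b) (a ^ r * d + c * b ^ r) := by
  funext p
  simp only [triangularMap, Function.comp_apply, Prod.mk.injEq]
  constructor <;> ring

theorem triangularMap_iterate_succ (r n : ℕ) (a c : R) :
    (triangularMap r a c)^[n + 1] = triangularMap r (a ^ (n + 1)) ((n + 1) * a ^ (r * n) * c) := by
  induction n with
  | zero => simp
  | succ n ih =>
    rw [Function.iterate_succ', ih, triangularMap_comp]
    push_cast
    congr 1 <;> ring

end TriangularMap

theorem Real.rpow_one_div_natCast_pow {x : ℝ} (hx : 0 ≤ x) (n k : ℕ) :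
    (x ^ ((1 : ℝ) / k)) ^ n = x ^ ((n : ℝ) / k) := by
  rw [← Real.rpow_natCast, ← Real.rpow_mul hx, one_div_mul_eq_div]

open Real in
theorem stmt_8_general (δ : ℝ) (hδ : δ ∈ Set.Ioo (0 : ℝ) 1) (r : ℕ)
    (k : ℕ) (hk : 1 ≤ k)
    (f g : ℂ × ℂ → ℂ × ℂ)
    (hf : ∀ z w : ℂ, f (z, w) = (((δ ^ r : ℝ) : ℂ) * z + w ^ r, (δ : ℂ) * w))
    (hg : ∀ z w : ℂ, g (z, w) =
      (((δ ^ ((r : ℝ) / (k : ℝ)) : ℝ) : ℂ) * z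
          + (((1 : ℝ) / (k : ℝ) : ℝ) : ℂ)
            * ((δ ^ ((r : ℝ) * (1 - (k : ℝ)) / (k : ℝ)) : ℝ) : ℂ) * w ^ r,
        ((δ ^ ((1 : ℝ) / (k : ℝ)) : ℝ) : ℂ) * w)) :
    g^[k] = f := by
  obtain ⟨hδ0, -⟩ := hδ
  obtain ⟨m, rfl⟩ : ∃ m, k = m + 1 := ⟨k - 1, by omega⟩
  have hk0 : ((m + 1 : ℕ) : ℝ) ≠ 0 := by positivity
  have hg' : g = triangularMap r ((δ ^ ((1 : ℝ) / (m + 1 : ℕ)) : ℝ) : ℂ)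
      ((((1 : ℝ) / (m + 1 : ℕ)) * δ ^ ((r : ℝ) * (1 - (m + 1 : ℕ)) / (m + 1 : ℕ)) : ℝ) : ℂ) := by
    funext ⟨z, w⟩
    rw [hg, triangularMap, ← Complex.ofReal_pow, Real.rpow_one_div_natCast_pow hδ0.le,
      Complex.ofReal_mul]
  have hf' : f = triangularMap r (δ : ℂ) 1 := by
    funext ⟨z, w⟩
    rw [hf, triangularMap, Complex.ofReal_pow, one_mul]
  have hpow : (δ ^ ((1 : ℝ) / (m + 1 : ℕ))) ^ (m + 1) = δ := by
    rw [Real.rpow_one_div_natCast_pow hδ0.le, div_self hk0, Real.rpow_one]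
  have hcoeff : ((m + 1 : ℕ) : ℝ) * (δ ^ ((1 : ℝ) / (m + 1 : ℕ))) ^ (r * m)
      * ((1 : ℝ) / (m + 1 : ℕ) * δ ^ ((r : ℝ) * (1 - (m + 1 : ℕ)) / (m + 1 : ℕ))) = 1 := by
    rw [Real.rpow_one_div_natCast_pow hδ0.le, mul_mul_mul_comm, mul_one_div_cancel hk0, one_mul,
      ← Real.rpow_add hδ0]
    push_cast
    ring_nf
    exact Real.rpow_zero δ
  rw [hg', hf', triangularMap_iterate_succ, ← Complex.ofReal_pow, hpow]
  congr 1
  exact_mod_cast hcoeff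

open Real in
/-- The explicit k-th root `g` of the class IIₐ contraction
`f(z,w) = (δ^r z + w^r, δ w)` indeed satisfies `g^[k] = f`. -/
theorem stmt_8 (δ : ℝ) (hδ : δ ∈ Set.Ioo (0 : ℝ) 1) (r : ℕ) (hr : 2 ≤ r)
    (k : ℕ) (hk : 1 ≤ k)
    (f g : ℂ × ℂ → ℂ × ℂ)
    (hf : ∀ z w : ℂ, f (z, w) = (((δ ^ r : ℝ) : ℂ) * z + w ^ r, (δ : ℂ) * w))
    (hg : ∀ z w : ℂ, g (z, w) =
      (((δ ^ ((r : ℝ) / (k : ℝ)) : ℝ) : ℂ) * z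
          + (((1 : ℝ) / (k : ℝ) : ℝ) : ℂ)
            * ((δ ^ ((r : ℝ) * (1 - (k : ℝ)) / (k : ℝ)) : ℝ) : ℂ) * w ^ r,
        ((δ ^ ((1 : ℝ) / (k : ℝ)) : ℝ) : ℂ) * w)) :
    g^[k] = f :=
  stmt_8_general δ hδ r k hk f g hf hg
end

section
/- Let δ ∈ (0,1) and r ≥ 2. For t ∈ ℝ define f^t : ℂ² → ℂ² by f^t(z,w) = (δ^{rt}·z + t·δ^{r(t−1)}·w^r, δ^t·w), where δ^s = exp(s·ln δ). Then the map t ↦ f^t is a one-parameter group: f^{s+t} = f^s ∘ f^t for all s, t ∈ ℝ, and f^1(z,w) = (δ^r z + w^r, δw). -/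
/-! The flow is `(z, w) ↦ (δ^{rt} (z + t δ^{-r} w^r), δ^t w)`: the linear part is the
one-parameter group `δ^{diag(r, 1)}`, and it commutes with the shear `z ↦ z + t δ^{-r} w^r`
because `w^r` is rescaled by exactly `δ^{rt}`. Hence `f^{s+t} = f^s ∘ f^t` reduces to the
laws of exponents `δ^{a+b} = δ^a δ^b` and `(δ^t)^r = δ^{rt}`. -/

noncomputable def triangularFlow (δ : ℝ) (r : ℕ) (t : ℝ) (p : ℂ × ℂ) : ℂ × ℂ :=
  (((δ ^ ((r : ℝ) * t) : ℝ) : ℂ) * p.1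
      + (t : ℂ) * ((δ ^ ((r : ℝ) * (t - 1)) : ℝ) : ℂ) * p.2 ^ r,
    ((δ ^ t : ℝ) : ℂ) * p.2)

section

variable {δ : ℝ} (hδ : 0 < δ) (r : ℕ)
include hδ

theorem triangularFlow_add (s t : ℝ) :
    triangularFlow δ r (s + t) = triangularFlow δ r s ∘ triangularFlow δ r t := by
  funext ⟨z, w⟩
  have hpow : (δ ^ t) ^ r = δ ^ ((r : ℝ) * t) := by
    rw [← Real.rpow_natCast, ← Real.rpow_mul hδ.le, mul_comm]
  have hlin : δ ^ ((r : ℝ) * (s + t)) = δ ^ ((r : ℝ) * s) * δ ^ ((r : ℝ) * t) := by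
    rw [← Real.rpow_add hδ, mul_add]
  have hleft : δ ^ ((r : ℝ) * (s + t - 1)) = δ ^ ((r : ℝ) * s) * δ ^ ((r : ℝ) * (t - 1)) := by
    rw [← Real.rpow_add hδ]; ring_nf
  have hright : δ ^ ((r : ℝ) * (s + t - 1)) = δ ^ ((r : ℝ) * (s - 1)) * (δ ^ t) ^ r := by
    rw [hpow, ← Real.rpow_add hδ]; ring_nf
  have hsecond : δ ^ (s + t) = δ ^ s * δ ^ t := Real.rpow_add hδ s t
  simp only [triangularFlow, Function.comp_apply, Prod.mk.injEq]
  constructor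
  · apply_fun ((↑) : ℝ → ℂ) at hlin hleft hright
    push_cast at hlin hleft hright ⊢
    linear_combination z * hlin + t * w ^ r * hleft + s * w ^ r * hright
  · rw [hsecond]
    push_cast
    ring

end

theorem triangularFlow_one (δ : ℝ) (r : ℕ) (z w : ℂ) :
    triangularFlow δ r 1 (z, w) = (((δ ^ r : ℝ) : ℂ) * z + w ^ r, (δ : ℂ) * w) := by
  simp [triangularFlow]

theorem stmt_9_general (δ : ℝ) (hδ : δ ∈ Set.Ioo (0 : ℝ) 1) (r : ℕ)
    (F : ℝ → ℂ × ℂ → ℂ × ℂ)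
    (hF : ∀ (t : ℝ) (z w : ℂ), F t (z, w) =
      (((δ ^ ((r : ℝ) * t) : ℝ) : ℂ) * z
          + (t : ℂ) * ((δ ^ ((r : ℝ) * (t - 1)) : ℝ) : ℂ) * w ^ r,
        ((δ ^ t : ℝ) : ℂ) * w)) :
    (∀ s t : ℝ, F (s + t) = F s ∘ F t) ∧
    (∀ z w : ℂ, F 1 (z, w) = (((δ ^ r : ℝ) : ℂ) * z + w ^ r, (δ : ℂ) * w)) := by
  have hF_eq : F = triangularFlow δ r := by
    funext t ⟨z, w⟩
    exact hF t z w
  subst hF_eq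
  exact ⟨triangularFlow_add hδ.1 r, triangularFlow_one δ r⟩

/-- The family `f^t(z,w) = (δ^{rt} z + t δ^{r(t-1)} w^r, δ^t w)` is a one-parameter
group of automorphisms with `f^1 = f`. -/
theorem stmt_9 (δ : ℝ) (hδ : δ ∈ Set.Ioo (0 : ℝ) 1) (r : ℕ) (hr : 2 ≤ r)
    (F : ℝ → ℂ × ℂ → ℂ × ℂ)
    (hF : ∀ (t : ℝ) (z w : ℂ), F t (z, w) =
      (((δ ^ ((r : ℝ) * t) : ℝ) : ℂ) * z
          + (t : ℂ) * ((δ ^ ((r : ℝ) * (t - 1)) : ℝ) : ℂ) * w ^ r,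
        ((δ ^ t : ℝ) : ℂ) * w)) :
    (∀ s t : ℝ, F (s + t) = F s ∘ F t) ∧
    (∀ z w : ℂ, F 1 (z, w) = (((δ ^ r : ℝ) : ℂ) * z + w ^ r, (δ : ℂ) * w)) :=
  stmt_9_general δ hδ r F hF
end

section
/- Let δ ∈ (0,1), r ≥ 2, c ∈ ℝ, and B > 0 with B ≥ c²/(r²·δ^{2r}·(ln δ)²). Define η(z,w) = |z|² + B·|w|^{2r} on W = ℂ²∖{0}, and let f^t be the one-parameter group f^t(z,w) = (δ^{rt}z + ct·δ^{r(t−1)}w^r, δ^t w). Then d/dt|_{t=0} η(f^t(z,w)) ≤ r·ln(δ)·η(z,w) < 0 for all (z,w) ∈ W. -/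
theorem aux_abs_sq (a b : ℝ) (z u : ℂ) : ‖(a:ℂ) * z + (b:ℂ) * u‖ ^ 2
    = a^2 * ‖z‖ ^ 2 + 2*a*b*(z * (starRingEnd ℂ) u).re + b^2 * ‖u‖ ^ 2 := by
  simp only [Complex.sq_norm, Complex.normSq_add, Complex.normSq_mul, Complex.normSq_ofReal,
    map_mul, Complex.conj_ofReal]
  rw [show (a:ℂ) * z * ((b:ℂ) * (starRingEnd ℂ) u) = ((a*b : ℝ):ℂ) * (z * (starRingEnd ℂ) u) by
      push_cast; ring,
    Complex.re_ofReal_mul]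
  ring

set_option maxHeartbeats 1000000 in
/-- For `η(z,w) = |z|² + B|w|^{2r}` with `B ≥ c²/(r² δ^{2r} (ln δ)²)`, the derivative
at `t = 0` of `t ↦ η(f^t(z,w))` is at most `r ln(δ) η(z,w) < 0` on `W = ℂ² ∖ {0}`. -/
theorem stmt_10 (δ : ℝ) (hδ : δ ∈ Set.Ioo (0 : ℝ) 1) (r : ℕ) (hr : 2 ≤ r)
    (c : ℝ) (B : ℝ) (hB : 0 < B)
    (hBc : c ^ 2 / ((r : ℝ) ^ 2 * δ ^ (2 * r) * (Real.log δ) ^ 2) ≤ B)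
    (η : ℂ × ℂ → ℝ)
    (hη : ∀ z w : ℂ, η (z, w) = ‖z‖ ^ 2 + B * ‖w‖ ^ (2 * r))
    (F : ℝ → ℂ × ℂ → ℂ × ℂ)
    (hF : ∀ (t : ℝ) (z w : ℂ), F t (z, w) =
      (((δ ^ ((r : ℝ) * t) : ℝ) : ℂ) * z
          + (c : ℂ) * (t : ℂ) * ((δ ^ ((r : ℝ) * (t - 1)) : ℝ) : ℂ) * w ^ r,
        ((δ ^ t : ℝ) : ℂ) * w)) :
    ∀ p : ℂ × ℂ, p ≠ 0 →
      deriv (fun t => η (F t p)) 0 ≤ (r : ℝ) * Real.log δ * η p ∧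
      (r : ℝ) * Real.log δ * η p < 0 := by
  rintro ⟨z, w⟩ hp
  have hδp : 0 < δ := hδ.1
  set L := Real.log δ with hLdef
  have hL : L < 0 := Real.log_neg hδp hδ.2
  set a := ‖z‖ with hadef
  set b := ‖w‖ ^ r with hbdef
  set K2 := (z * (starRingEnd ℂ) w ^ r).re with hK2def
  have ha : 0 ≤ a := norm_nonneg z
  have hb : 0 ≤ b := pow_nonneg (norm_nonneg w) r
  have hw2r : ‖w‖ ^ (2 * r) = b ^ 2 := by
    rw [hbdef, ← pow_mul, mul_comm]
  -- the function equals an explicit real-analytic expression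
  have hfun : (fun t => η (F t (z, w))) = (fun t =>
      Real.exp (2*(r:ℝ)*L*t) * a ^ 2
      + 2*c*t*Real.exp (L*(r:ℝ)*(2*t-1)) * K2
      + c^2*t^2*Real.exp (2*L*(r:ℝ)*(t-1)) * b^2
      + B * (Real.exp (2*(r:ℝ)*L*t) * b^2)) := by
    funext t
    rw [hF, hη,
      show (c:ℂ)*(t:ℂ)*((δ^((r:ℝ)*(t-1)) : ℝ):ℂ) * w^r = ((c*t*δ^((r:ℝ)*(t-1)) : ℝ):ℂ) * (w^r) by
        push_cast; ring,
      aux_abs_sq]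
    rw [norm_mul, Complex.norm_real, Real.norm_eq_abs, abs_of_pos (Real.rpow_pos_of_pos hδp t)]
    simp only [Real.rpow_def_of_pos hδp, norm_pow, map_pow, mul_pow, hadef, hbdef, hK2def, hLdef]
    rw [← Real.exp_nat_mul, ← Real.exp_nat_mul, ← Real.exp_nat_mul]
    simp only [← Real.exp_add, ← pow_mul]
    push_cast
    ring_nf
    have h2 : Real.exp (Real.log δ * (r:ℝ) * t) *
          Real.exp (-(Real.log δ * (r:ℝ)) + Real.log δ * (r:ℝ) * t)
        = Real.exp (-(Real.log δ * (r:ℝ)) + Real.log δ * (r:ℝ) * t * 2) := by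
      rw [← Real.exp_add]; ring_nf
    linear_combination (2*c*t*(z * (starRingEnd ℂ) w ^ r).re) * h2
  set E := Real.exp (-(L*(r:ℝ))) with hEdef
  -- derivative computation
  have hD : HasDerivAt (fun t => η (F t (z, w)))
      (2*(r:ℝ)*L* a^2 + 2*c*E*K2 + B*(2*(r:ℝ)*L* b^2)) 0 := by
    rw [hfun]
    have e1 : HasDerivAt (fun t : ℝ => Real.exp (2*(r:ℝ)*L*t)) (2*(r:ℝ)*L) 0 := by
      simpa using ((hasDerivAt_id (0:ℝ)).const_mul (2*(r:ℝ)*L)).exp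
    have lin : HasDerivAt (fun t : ℝ => 2*c*t) (2*c) 0 := by
      simpa using (hasDerivAt_id (0:ℝ)).const_mul (2*c)
    have inner2 : HasDerivAt (fun t : ℝ => L*(r:ℝ)*(2*t-1)) (L*(r:ℝ)*2) 0 := by
      simpa using (((hasDerivAt_id (0:ℝ)).const_mul (2:ℝ)).sub_const 1).const_mul (L*(r:ℝ))
    have exp2 := inner2.exp
    have inner3 : HasDerivAt (fun t : ℝ => 2*L*(r:ℝ)*(t-1)) (2*L*(r:ℝ)) 0 := by
      simpa using ((hasDerivAt_id (0:ℝ)).sub_const 1).const_mul (2*L*(r:ℝ))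
    have exp3 := inner3.exp
    have sq : HasDerivAt (fun t : ℝ => c^2*t^2) 0 0 := by
      simpa using (hasDerivAt_pow 2 (0:ℝ)).const_mul (c^2)
    have H := (((e1.mul_const (a^2)).add ((lin.mul exp2).mul_const K2)).add
        ((sq.mul exp3).mul_const (b^2))).add ((e1.mul_const (b^2)).const_mul B)
    exact H.congr_deriv (by simp [hEdef])
  rw [hD.deriv, hη, hw2r, ← hadef]
  clear hD hfun hF hη
  -- key inequalities
  have hδ2r : (0:ℝ) < δ ^ (2*r) := pow_pos hδp _
  have hrpos : (0:ℝ) < (r:ℝ) := by positivity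
  have hL2 : (0:ℝ) < L^2 := by nlinarith
  have hc2 : c^2 ≤ B * ((r:ℝ)^2 * δ^(2*r) * L^2) := by
    rw [div_le_iff₀ (mul_pos (mul_pos (by positivity) hδ2r) hL2)] at hBc
    linarith [hBc]
  have hδe : δ ^ (2*r) = Real.exp (L * (2*r : ℕ)) := by
    rw [← Real.rpow_natCast δ (2*r), Real.rpow_def_of_pos hδp]
  have hE1 : E ^ 2 * δ ^ (2*r) = 1 := by
    rw [hδe, hEdef, ← Real.exp_nat_mul, ← Real.exp_add,
      show ((2:ℕ):ℝ) * (-(L*(r:ℝ))) + L * ((2*r : ℕ) : ℝ) = 0 by push_cast; ring, Real.exp_zero]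
  have hEpos : 0 < E := Real.exp_pos _
  have hK2 : |K2| ≤ a * b := by
    refine (Complex.abs_re_le_norm _).trans_eq ?_
    simp [hadef, hbdef, norm_mul, norm_pow, Complex.norm_conj]
  obtain ⟨hK2u, hK2l⟩ := abs_le.1 hK2
  have hηpos : 0 < a^2 + B * b^2 := by
    by_cases hz : z = 0
    · have hw : w ≠ 0 := by
        intro hw; exact hp (by simp [hz, hw, Prod.ext_iff])
      have hbpos : 0 < b := pow_pos (norm_pos_iff.2 hw) r
      nlinarith [sq_nonneg a, mul_pos hB (pow_pos hbpos 2)]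
    · have hapos : 0 < a := norm_pos_iff.2 hz
      nlinarith [sq_nonneg b, mul_nonneg hB.le (sq_nonneg b)]
  constructor
  · have hcE2 : (c*E)^2 ≤ B * (r:ℝ)^2 * L^2 := by
      have h := mul_le_mul_of_nonneg_right hc2 (sq_nonneg E)
      calc (c*E)^2 = c^2 * E^2 := by ring
        _ ≤ B * ((r:ℝ)^2 * δ^(2*r) * L^2) * E^2 := h
        _ = B * (r:ℝ)^2 * L^2 * (E^2 * δ^(2*r)) := by ring
        _ = B * (r:ℝ)^2 * L^2 := by rw [hE1]; ring
    set m := abs (c*E) with hmdef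
    have hcE2' : m^2 ≤ B * (r:ℝ)^2 * L^2 := by rw [hmdef, sq_abs]; exact hcE2
    have hq1 : 2*(c*E)*K2 ≤ 2*(m*(a*b)) := by
      have h1 : (c*E)*K2 ≤ |(c*E)*K2| := le_abs_self _
      have h2 : |(c*E)*K2| = m*|K2| := abs_mul _ _
      have h3 : m*|K2| ≤ m*(a*b) := mul_le_mul_of_nonneg_left hK2 (abs_nonneg _)
      linarith
    have hrs : 0 < (r:ℝ)*(-L) := mul_pos hrpos (neg_pos.2 hL)
    have hm2 : m^2 ≤ B*((r:ℝ)*(-L))^2 := by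
      have hring : B*((r:ℝ)*(-L))^2 = B*(r:ℝ)^2*L^2 := by ring
      linarith [hcE2']
    have key : ((r:ℝ)*(-L))*(((r:ℝ)*(-L))*a^2 + ((r:ℝ)*(-L))*(B*b^2) - 2*(m*(a*b)))
        = (((r:ℝ)*(-L))*a - m*b)^2 + (B*((r:ℝ)*(-L))^2 - m^2)*b^2 := by ring
    have hX : 0 ≤ (((r:ℝ)*(-L))*a - m*b)^2 + (B*((r:ℝ)*(-L))^2 - m^2)*b^2 :=
      add_nonneg (sq_nonneg _) (mul_nonneg (sub_nonneg.2 hm2) (sq_nonneg b))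
    have hX2 : 0 ≤ ((r:ℝ)*(-L))*a^2 + ((r:ℝ)*(-L))*(B*b^2) - 2*(m*(a*b)) := by
      by_contra h
      push_neg at h
      nlinarith [mul_pos hrs (neg_pos.2 h)]
    linarith
  · exact mul_neg_of_neg_of_pos (mul_neg_of_pos_of_neg hrpos hL) hηpos
end
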